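/- Let q ∈ ℂ be nonzero. Define ℂ-linear endomorphisms of A by: x₁f = x·f(x, qy, qz, q⁻¹w); x₂f = y·f(q⁻¹x, y, q⁻¹z, q⁻²w); x₃f = z·f(q⁻¹x, qy, z, q⁻¹w); x₄f = w·f(qx, q²y, qz, w); x₅f = f; x₆f = f(q⁴x, q⁴y, q⁴z, q⁴w). Then for all i, j ∈ {1, …, 6} one has x_i ∘ x_j = q^{Q_{ij}} · (x_j ∘ x_i), where Q is the antisymmetric integer matrix with rows (0, 2, 2, −2, 0, −4), (−2, 0, −2, −4, 0, −4), (−2, 2, 0, −2, 0, −4), (2, 4, 2, 0, 0, −4), (0, 0, 0, 0, 0, 0), (4, 4, 4, 4, 0, 0). -/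

import Mathlib

/-!
Statement 7: the six operators x₁,…,x₆ on the Laurent polynomial ring
`A = ℂ[x^{±1}, y^{±1}, z^{±1}, w^{±1}]` q-commute according to the antisymmetric
integer matrix Q.
-/

noncomputable section

/-- The Laurent polynomial ring `ℂ[x^{±1}, y^{±1}, z^{±1}, w^{±1}]`, realized as the
group algebra of `ℤ⁴` over `ℂ`. -/
abbrev La : Type := AddMonoidAlgebra ℂ (Fin 4 → ℤ)

/-- The Laurent monomial with exponent vector `u`. -/
def lmono (u : Fin 4 → ℤ) : La := AddMonoidAlgebra.single u 1

/-- The substitution `f(x,y,z,w) ↦ f(q^{e 0} x, q^{e 1} y, q^{e 2} z, q^{e 3} w)`: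
the ℂ-linear map sending the monomial with exponent vector `v` to
`(∏ j, (q^{e j})^{v j})` times itself. -/
def lsubst (q : ℂ) (e : Fin 4 → ℤ) : La →ₗ[ℂ] La :=
  (Finsupp.lsum ℂ fun (v : Fin 4 → ℤ) => (∏ j, q ^ (e j * v j)) • (AddMonoidAlgebra.lsingle v : ℂ →ₗ[ℂ] La)).comp
    (AddMonoidAlgebra.coeffLinearEquiv ℂ : La ≃ₗ[ℂ] ((Fin 4 → ℤ) →₀ ℂ)).toLinearMap

/-- Multiplication by the monomial with exponent vector `u`, composed with the
substitution scaling variable `j` by `q^{e j}`. -/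
def lterm (q : ℂ) (u e : Fin 4 → ℤ) : La →ₗ[ℂ] La :=
  (LinearMap.mulLeft ℂ (lmono u)).comp (lsubst q e)

/-- The six operators `x₁, …, x₆` of Statement 7. -/
def xop (q : ℂ) : Fin 6 → (La →ₗ[ℂ] La) :=
  ![lterm q ![1, 0, 0, 0] ![0, 1, 1, -1],
    lterm q ![0, 1, 0, 0] ![-1, 0, -1, -2],
    lterm q ![0, 0, 1, 0] ![-1, 1, 0, -1],
    lterm q ![0, 0, 0, 1] ![1, 2, 1, 0],
    LinearMap.id,
    lsubst q ![4, 4, 4, 4]]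

/-- The antisymmetric integer matrix `Q`. -/
def Qm : Matrix (Fin 6) (Fin 6) ℤ :=
  !![0, 2, 2, -2, 0, -4;
     -2, 0, -2, -4, 0, -4;
     -2, 2, 0, -2, 0, -4;
     2, 4, 2, 0, 0, -4;
     0, 0, 0, 0, 0, 0;
     4, 4, 4, 4, 0, 0]

/-- `lsubst` acts diagonally on Laurent monomials. -/
lemma lsubst_single (q : ℂ) (e v : Fin 4 → ℤ) (c : ℂ) :
    lsubst q e (AddMonoidAlgebra.single v c) = (∏ j, q ^ (e j * v j)) • AddMonoidAlgebra.single v c := by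
  rw [lsubst, LinearMap.comp_apply]; erw [Finsupp.lsum_single]; rfl

/-- `lterm` on a Laurent monomial: scale and shift the exponent vector. -/
lemma lterm_single (q : ℂ) (u e v : Fin 4 → ℤ) (c : ℂ) :
    lterm q u e (AddMonoidAlgebra.single v c)
      = (∏ j, q ^ (e j * v j)) • AddMonoidAlgebra.single (u + v) c := by
  simp only [lterm, LinearMap.comp_apply, lsubst_single, LinearMap.mulLeft_apply, lmono,
    mul_smul_comm]
  rw [AddMonoidAlgebra.single_mul_single, one_mul]

lemma lterm_lmono (q : ℂ) (u e v : Fin 4 → ℤ) :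
    lterm q u e (lmono v) = (∏ j, q ^ (e j * v j)) • lmono (u + v) :=
  lterm_single q u e v 1

/-- Two ℂ-linear endomorphisms of `La` agreeing on all Laurent monomials are equal. -/
lemma la_hom_ext {φ ψ : La →ₗ[ℂ] La} (h : ∀ v, φ (lmono v) = ψ (lmono v)) : φ = ψ := by
  apply AddMonoidAlgebra.lhom_ext'
  intro a
  apply LinearMap.ext_ring
  exact h a

lemma prodq (q : ℂ) (hq : q ≠ 0) (a : Fin 4 → ℤ) :
    ∏ j, q ^ a j = q ^ (∑ j, a j) := by
  simp [Fin.prod_univ_four, Fin.sum_univ_four, zpow_add₀ hq]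

/-- The fundamental q-commutation rule for two `lterm` operators. -/
lemma lterm_comp (q : ℂ) (hq : q ≠ 0) (u e u' e' : Fin 4 → ℤ) (n : ℤ)
    (h : ∑ j, (e j * u' j - e' j * u j) = n) :
    lterm q u e ∘ₗ lterm q u' e' = q ^ n • (lterm q u' e' ∘ₗ lterm q u e) := by
  apply la_hom_ext
  intro v
  simp only [LinearMap.comp_apply, LinearMap.smul_apply, lterm_lmono, map_smul, smul_smul]
  rw [add_left_comm]
  congr 1
  rw [prodq q hq, prodq q hq, prodq q hq, prodq q hq, ← zpow_add₀ hq, ← zpow_add₀ hq,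
    ← zpow_add₀ hq]
  congr 1
  subst h
  simp only [Pi.add_apply, Fin.sum_univ_four]
  ring

/-- The monomial exponent vectors `u_i` of the six operators. -/
def Um : Fin 6 → Fin 4 → ℤ :=
  ![![1, 0, 0, 0], ![0, 1, 0, 0], ![0, 0, 1, 0], ![0, 0, 0, 1], 0, 0]

/-- The scaling exponent vectors `e_i` of the six operators. -/
def Em : Fin 6 → Fin 4 → ℤ :=
  ![![0, 1, 1, -1], ![-1, 0, -1, -2], ![-1, 1, 0, -1], ![1, 2, 1, 0], 0, ![4, 4, 4, 4]]

lemma id_eq_lterm (q : ℂ) : (LinearMap.id : La →ₗ[ℂ] La) = lterm q 0 0 := by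
  apply la_hom_ext
  intro v
  simp [lterm_lmono]

lemma lsubst_eq_lterm (q : ℂ) (e : Fin 4 → ℤ) : lsubst q e = lterm q 0 e := by
  apply la_hom_ext
  intro v
  rw [lterm_lmono, lmono]
  erw [lsubst_single]
  rw [zero_add]
  rfl

lemma xop_eq (q : ℂ) (i : Fin 6) : xop q i = lterm q (Um i) (Em i) := by
  fin_cases i
  · rfl
  · rfl
  · rfl
  · rfl
  · exact id_eq_lterm q
  · exact lsubst_eq_lterm q _

theorem stmt7 (q : ℂ) (hq : q ≠ 0) (i j : Fin 6) :
    xop q i ∘ₗ xop q j = (q ^ (Qm i j)) • (xop q j ∘ₗ xop q i) := by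
  rw [xop_eq, xop_eq]
  exact lterm_comp q hq _ _ _ _ _ (by fin_cases i <;> fin_cases j <;> decide)

end
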